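/- Let J be uniform on {1,...,ℓ}, and let X, Y be finite-valued random variables such that, conditionally on J = j, X has law Q_j(X) and Y has law Q_j(Y) with A_j Q_j(Y) = Q_j(X) for stochastic matrices A_j. If I(X:J) - I(Y:J) > log₂ d for some positive integer d, then the matrices A_1, ..., A_ℓ take more than d distinct values. -/

import Mathlib

open Finset

/-- Shannon entropy (base 2). -/
noncomputable def entC {n : ℕ} (v : Fin n → ℝ) : ℝ :=
  -∑ i, v i * Real.logb 2 (v i)

/-!
Let `K = A_J`. Given `K`, the observation `X` is obtained from `Y` by the fixed channel `K`, so
`I(X : J) ≤ I(Y, K : J) ≤ I(Y : J) + H(K) ≤ I(Y : J) + log #{values of K}`. In divergence form: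
on the fiber `{i | A i = A j}`, of size `c`, the mixture of the laws of `X` dominates `c / ℓ`
times `A j` applied to the fiber mean of the laws of `Y`; data processing then bounds
`D(Q_j(X) ‖ mixture)` by `D(Q_j(Y) ‖ fiber mean) + log (ℓ / c)`. Fiber means are closer to the
`Q_j(Y)` than the global mixture is, and the average of `log (ℓ / c)` is `H(K)`.
-/

open Real Matrix

lemma mul_log_div_eq_sub {a b : ℝ} (h : b = 0 → a = 0) :
    a * log (a / b) = a * log a - a * log b := by
  rcases eq_or_ne a 0 with rfl | ha
  · simp
  · rw [log_div ha (mt h ha), mul_sub]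

lemma sub_le_mul_log_div {a b : ℝ} (ha : 0 ≤ a) (hb : 0 ≤ b) (h : b = 0 → a = 0) :
    a - b ≤ a * log (a / b) := by
  rcases hb.eq_or_lt with rfl | hb
  · simp [h rfl]
  · have := mul_le_mul_of_nonneg_left (self_sub_one_le_mul_log (div_nonneg ha hb.le)) hb.le
    rwa [mul_sub, mul_div_cancel₀ _ hb.ne', mul_one, ← mul_assoc, mul_div_cancel₀ _ hb.ne']
      at this

/-- The log-sum inequality. -/
theorem sum_mul_log_div_sum_le {ι : Type*} (s : Finset ι) {a b : ι → ℝ}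
    (ha : ∀ i ∈ s, 0 ≤ a i) (hb : ∀ i ∈ s, 0 ≤ b i) (hab : ∀ i ∈ s, b i = 0 → a i = 0) :
    (∑ i ∈ s, a i) * log ((∑ i ∈ s, a i) / ∑ i ∈ s, b i)
      ≤ ∑ i ∈ s, a i * log (a i / b i) := by
  rcases (sum_nonneg ha).eq_or_lt with hA | hA
  · rw [← hA, zero_mul]
    refine sum_nonneg fun i hi => ?_
    rw [(sum_eq_zero_iff_of_nonneg ha).1 hA.symm i hi, zero_mul]
  have hB : 0 < ∑ i ∈ s, b i := (sum_nonneg hb).lt_of_ne fun hB => hA.ne' <|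
    sum_eq_zero fun i hi => hab i hi ((sum_eq_zero_iff_of_nonneg hb).1 hB.symm i hi)
  set t := (∑ i ∈ s, a i) / ∑ i ∈ s, b i
  have ht : 0 < t := div_pos hA hB
  have key : ∀ i ∈ s, a i - b i * t ≤ a i * log (a i / b i) - a i * log t := by
    intro i hi
    rcases eq_or_ne (a i) 0 with h0 | h0
    · simp only [h0, zero_mul, sub_zero, zero_sub, neg_nonpos]
      exact mul_nonneg (hb i hi) ht.le
    have hbi : 0 < b i := (hb i hi).lt_of_ne fun h => h0 (hab i hi h.symm)
    have := sub_le_mul_log_div (ha i hi) (mul_nonneg hbi.le ht.le)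
      fun h => absurd h (mul_pos hbi ht).ne'
    rwa [div_mul_eq_div_div, log_div (div_ne_zero h0 hbi.ne') ht.ne', mul_sub] at this
  have hsum := sum_le_sum key
  rw [sum_sub_distrib, sum_sub_distrib, ← sum_mul, ← sum_mul, mul_div_cancel₀ _ hB.ne',
    sub_self] at hsum
  linarith

variable {α β ι : Type*}

section RelEntropy

variable [Fintype α]

/-- Relative entropy (Kullback–Leibler divergence) in nats. Where `ν a = 0 < μ a` the summand
is junk (`log 0 = 0`), so all statements below assume `μ ≪ ν`. -/
noncomputable def relEntropy (μ ν : α → ℝ) : ℝ := ∑ a, μ a * log (μ a / ν a)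

lemma relEntropy_eq_sub {μ ν : α → ℝ} (hac : ∀ a, ν a = 0 → μ a = 0) :
    relEntropy μ ν = ∑ a, μ a * log (μ a) - ∑ a, μ a * log (ν a) := by
  rw [relEntropy, ← sum_sub_distrib]
  exact sum_congr rfl fun a _ => mul_log_div_eq_sub (hac a)

lemma relEntropy_nonneg {μ ν : α → ℝ} (hμ : 0 ≤ μ) (hν : 0 ≤ ν)
    (hμ1 : ∑ a, μ a = 1) (hν1 : ∑ a, ν a = 1) (hac : ∀ a, ν a = 0 → μ a = 0) :
    0 ≤ relEntropy μ ν := by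
  have := sum_mul_log_div_sum_le univ (fun a _ => hμ a) (fun a _ => hν a) fun a _ => hac a
  rwa [hμ1, hν1, div_one, log_one, mul_zero] at this

lemma relEntropy_le_sub_log_of_smul_le {μ ν ν' : α → ℝ} {c : ℝ} (hμ : 0 ≤ μ)
    (hμ1 : ∑ a, μ a = 1) (hc : 0 < c) (hac : ∀ a, μ a ≠ 0 → 0 < ν a) (hle : c • ν ≤ ν') :
    relEntropy μ ν' ≤ relEntropy μ ν - log c := by
  have key : ∀ a, μ a * log (μ a / ν' a) ≤ μ a * log (μ a / ν a) - μ a * log c := by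
    intro a
    rcases eq_or_ne (μ a) 0 with h0 | h0
    · simp [h0]
    have hνa := hac a h0
    have hle_a : ν a * c ≤ ν' a := by simpa [mul_comm] using hle a
    have hν'a : 0 < ν' a := (mul_pos hνa hc).trans_le hle_a
    rw [← mul_sub, ← log_div (div_ne_zero h0 hνa.ne') hc.ne', div_div]
    refine mul_le_mul_of_nonneg_left (log_le_log (div_pos ((hμ a).lt_of_ne' h0) hν'a) ?_) (hμ a)
    exact div_le_div_of_nonneg_left (hμ a) (mul_pos hνa hc) hle_a
  calc relEntropy μ ν' ≤ ∑ a, (μ a * log (μ a / ν a) - μ a * log c) := sum_le_sum fun a _ => key a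
    _ = relEntropy μ ν - log c := by rw [sum_sub_distrib, ← sum_mul, hμ1, one_mul, relEntropy]

/-- The data processing inequality for a column-stochastic matrix. -/
theorem relEntropy_mulVec_le [Fintype β] {B : Matrix α β ℝ} (hB : ∀ x y, 0 ≤ B x y)
    (hB1 : ∀ y, ∑ x, B x y = 1) {μ ν : β → ℝ} (hμ : 0 ≤ μ) (hν : 0 ≤ ν)
    (hac : ∀ y, ν y = 0 → μ y = 0) :
    relEntropy (B *ᵥ μ) (B *ᵥ ν) ≤ relEntropy μ ν := by
  have cancel : ∀ x y, B x y * μ y * log (B x y * μ y / (B x y * ν y))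
      = B x y * (μ y * log (μ y / ν y)) := by
    intro x y
    rcases eq_or_ne (B x y) 0 with h0 | h0
    · simp [h0]
    · rw [mul_div_mul_left _ _ h0, mul_assoc]
  calc relEntropy (B *ᵥ μ) (B *ᵥ ν)
      ≤ ∑ x, ∑ y, B x y * μ y * log (B x y * μ y / (B x y * ν y)) :=
        sum_le_sum fun x _ => sum_mul_log_div_sum_le univ
          (fun y _ => mul_nonneg (hB x y) (hμ y)) (fun y _ => mul_nonneg (hB x y) (hν y))
          fun y _ h => by rcases mul_eq_zero.1 h with h | h <;> simp [h, hac]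
    _ = relEntropy μ ν := by
        simp only [cancel, relEntropy]
        rw [sum_comm]
        simp only [← sum_mul, hB1, one_mul]

end RelEntropy

section FamilyMean

variable {s : Finset ι} {P : ι → α → ℝ}

noncomputable def familyMean (s : Finset ι) (P : ι → α → ℝ) : α → ℝ :=
  (#s : ℝ)⁻¹ • ∑ i ∈ s, P i

lemma familyMean_apply (s : Finset ι) (P : ι → α → ℝ) (a : α) :
    familyMean s P a = (#s : ℝ)⁻¹ * ∑ i ∈ s, P i a := by
  simp [familyMean, Finset.sum_apply]

lemma familyMean_nonneg (hP : ∀ i ∈ s, 0 ≤ P i) : 0 ≤ familyMean s P := fun a => by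
  rw [familyMean_apply]
  exact mul_nonneg (by positivity) (sum_nonneg fun i hi => hP i hi a)

lemma card_smul_familyMean (hs : s.Nonempty) : (#s : ℝ) • familyMean s P = ∑ i ∈ s, P i :=
  smul_inv_smul₀ (Nat.cast_ne_zero.2 hs.card_pos.ne') _

lemma card_mul_familyMean (hs : s.Nonempty) (a : α) :
    (#s : ℝ) * familyMean s P a = ∑ i ∈ s, P i a := by
  simpa [Finset.sum_apply] using congrFun (card_smul_familyMean (P := P) hs) a

lemma le_card_mul_familyMean (hP : ∀ i ∈ s, 0 ≤ P i) {i : ι} (hi : i ∈ s) (a : α) :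
    P i a ≤ #s * familyMean s P a := by
  rw [card_mul_familyMean ⟨i, hi⟩]
  exact single_le_sum (fun j hj => hP j hj a) hi

lemma eq_zero_of_familyMean_eq_zero (hP : ∀ i ∈ s, 0 ≤ P i) {i : ι} (hi : i ∈ s) {a : α}
    (h : familyMean s P a = 0) : P i a = 0 :=
  le_antisymm (by simpa [h] using le_card_mul_familyMean hP hi a) (hP i hi a)

lemma sum_familyMean [Fintype α] (hs : s.Nonempty) (hP1 : ∀ i ∈ s, ∑ a, P i a = 1) :
    ∑ a, familyMean s P a = 1 := by
  simp only [familyMean_apply, ← mul_sum]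
  rw [sum_comm, sum_congr rfl hP1, sum_const, nsmul_one,
    inv_mul_cancel₀ (Nat.cast_ne_zero.2 hs.card_pos.ne')]

lemma sum_sum_mul_eq_card_mul_familyMean [Fintype α] (hs : s.Nonempty) (f : α → ℝ) :
    ∑ i ∈ s, ∑ a, P i a * f a = #s * ∑ a, familyMean s P a * f a := by
  rw [sum_comm, mul_sum]
  exact sum_congr rfl fun a _ => by rw [← sum_mul, ← card_mul_familyMean hs, mul_assoc]

/-- The gap between the two sides is `#s` times the divergence from the mean to `ν`. -/
theorem sum_relEntropy_familyMean_le [Fintype α] {ν : α → ℝ} (hP : ∀ i ∈ s, 0 ≤ P i)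
    (hP1 : ∀ i ∈ s, ∑ a, P i a = 1) (hν : 0 ≤ ν) (hν1 : ∑ a, ν a = 1)
    (hac : ∀ i ∈ s, ∀ a, ν a = 0 → P i a = 0) :
    ∑ i ∈ s, relEntropy (P i) (familyMean s P) ≤ ∑ i ∈ s, relEntropy (P i) ν := by
  rcases s.eq_empty_or_nonempty with rfl | hs
  · simp
  have hPm : ∀ i ∈ s, ∀ a, familyMean s P a = 0 → P i a = 0 := fun i hi _ =>
    eq_zero_of_familyMean_eq_zero hP hi
  have hmν : ∀ a, ν a = 0 → familyMean s P a = 0 := fun a h => by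
    rw [familyMean_apply, sum_eq_zero fun i hi => hac i hi a h, mul_zero]
  have hgap : ∑ i ∈ s, relEntropy (P i) ν - ∑ i ∈ s, relEntropy (P i) (familyMean s P)
      = #s * relEntropy (familyMean s P) ν := by
    rw [sum_congr rfl fun i hi => relEntropy_eq_sub (hac i hi),
      sum_congr rfl fun i hi => relEntropy_eq_sub (hPm i hi), relEntropy_eq_sub hmν,
      sum_sub_distrib, sum_sub_distrib, sum_sum_mul_eq_card_mul_familyMean hs,
      sum_sum_mul_eq_card_mul_familyMean hs]
    ring
  have := relEntropy_nonneg (familyMean_nonneg hP) hν (sum_familyMean hs hP1) hν1 hmν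
  linarith [mul_nonneg (Nat.cast_nonneg (α := ℝ) #s) this]

end FamilyMean

section Fibers

variable {γ : Type*} [Fintype α] [Fintype ι] [DecidableEq γ]

theorem sum_relEntropy_fiberMean_le (g : ι → γ) {Q : ι → α → ℝ} {ν : α → ℝ}
    (hQ : ∀ i, 0 ≤ Q i) (hQ1 : ∀ i, ∑ a, Q i a = 1) (hν : 0 ≤ ν) (hν1 : ∑ a, ν a = 1)
    (hac : ∀ i a, ν a = 0 → Q i a = 0) :
    ∑ j, relEntropy (Q j) (familyMean {i | g i = g j} Q) ≤ ∑ j, relEntropy (Q j) ν := by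
  have hg : ∀ j ∈ univ, g j ∈ univ.image g := fun j hj => mem_image_of_mem g hj
  rw [← sum_fiberwise_of_maps_to hg, ← sum_fiberwise_of_maps_to hg]
  refine sum_le_sum fun b _ => ?_
  rw [sum_congr rfl fun j hj => by rw [(mem_filter.1 hj).2]]
  exact sum_relEntropy_familyMean_le (fun i _ => hQ i) (fun i _ => hQ1 i) hν hν1
    fun i _ => hac i

lemma sum_inv_card_fiber (g : ι → γ) :
    ∑ j, (#{i | g i = g j} : ℝ)⁻¹ = (Set.range g).ncard := by
  have hg : ∀ j ∈ univ, g j ∈ univ.image g := fun j hj => mem_image_of_mem g hj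
  rw [← sum_fiberwise_of_maps_to hg, Set.ncard_eq_toFinset_card', Set.toFinset_range,
    card_eq_sum_ones, Nat.cast_sum, Nat.cast_one]
  refine sum_congr rfl fun b hb => ?_
  obtain ⟨j, -, rfl⟩ := mem_image.1 hb
  rw [sum_congr rfl fun i hi => by rw [(mem_filter.1 hi).2], sum_const, nsmul_eq_mul,
    mul_inv_cancel₀]
  exact Nat.cast_ne_zero.2 (card_pos.2 ⟨j, by simp⟩).ne'

/-- The left side is the entropy of `g J` for `J` uniform on `ι`; Jensen's inequality for `log`
bounds it. -/
theorem sum_log_card_div_card_fiber_le [Nonempty ι] (g : ι → γ) :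
    (∑ j, log (Fintype.card ι / #{i | g i = g j})) / Fintype.card ι
      ≤ log (Set.range g).ncard := by
  have hn : (0 : ℝ) < Fintype.card ι := Nat.cast_pos.2 Fintype.card_pos
  have hc : ∀ j, (0 : ℝ) < #{i | g i = g j} := fun j =>
    Nat.cast_pos.2 (card_pos.2 ⟨j, by simp⟩)
  have := strictConcaveOn_log_Ioi.concaveOn.le_map_sum (t := univ)
    (w := fun _ => (Fintype.card ι : ℝ)⁻¹) (p := fun j => (Fintype.card ι : ℝ) / #{i | g i = g j})
    (fun _ _ => by positivity) (by simp [hn.ne']) fun j _ => div_pos hn (hc j)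
  simp only [smul_eq_mul, ← mul_sum] at this
  have hmean : (Fintype.card ι : ℝ)⁻¹ * ∑ j, (Fintype.card ι : ℝ) / #{i | g i = g j}
      = (Set.range g).ncard := by
    rw [mul_sum, ← sum_inv_card_fiber g]
    exact sum_congr rfl fun j _ => by field_simp
  rwa [hmean, inv_mul_eq_div] at this

end Fibers

section StochasticMaps

variable [Fintype β]

lemma mulVec_nonneg_of_nonneg {B : Matrix α β ℝ} (hB : ∀ x y, 0 ≤ B x y) {v : β → ℝ}
    (hv : 0 ≤ v) : 0 ≤ B *ᵥ v :=
  fun x => dotProduct_nonneg_of_nonneg (fun y => hB x y) hv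

variable [Fintype α] [Fintype ι]

lemma sum_mulVec_eq_sum {B : Matrix α β ℝ} (hB1 : ∀ y, ∑ x, B x y = 1) (v : β → ℝ) :
    ∑ x, (B *ᵥ v) x = ∑ y, v y := by
  simp only [mulVec, dotProduct]
  rw [sum_comm]
  simp only [← sum_mul, hB1, one_mul]

/-- The mutual information `I(X : J)` in nats, for `J` uniform on `ι` and `X` of law `Q j` given
`J = j`, in the form of the mean divergence of the `Q j` from their mixture. -/
noncomputable def indexInfo (Q : ι → α → ℝ) : ℝ :=
  (∑ j, relEntropy (Q j) (familyMean univ Q)) / Fintype.card ι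

lemma indexInfo_eq [Nonempty ι] {Q : ι → α → ℝ} (hQ : ∀ j, 0 ≤ Q j) :
    indexInfo Q = (∑ j, ∑ a, Q j a * log (Q j a)) / Fintype.card ι
      - ∑ a, familyMean univ Q a * log (familyMean univ Q a) := by
  have hn : (Fintype.card ι : ℝ) ≠ 0 := Nat.cast_ne_zero.2 Fintype.card_ne_zero
  rw [indexInfo, sum_congr rfl fun j _ => relEntropy_eq_sub fun a =>
      eq_zero_of_familyMean_eq_zero (fun i _ => hQ i) (mem_univ j), sum_sub_distrib,
    sum_sum_mul_eq_card_mul_familyMean univ_nonempty, card_univ]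
  field_simp

/-- On the fiber `s` of `A j` all matrices equal `A j`, so the mixture of the outputs dominates
`#s / card ι` times the image under `A j` of the fiber mean of the inputs. -/
theorem relEntropy_mulVec_mixture_le (A : ι → Matrix α β ℝ) {Q : ι → β → ℝ}
    (hQ : ∀ j, 0 ≤ Q j) (hQ1 : ∀ j, ∑ y, Q j y = 1) (hA : ∀ j x y, 0 ≤ A j x y)
    (hA1 : ∀ j y, ∑ x, A j x y = 1) (j : ι) :
    relEntropy (A j *ᵥ Q j) (familyMean univ fun i => A i *ᵥ Q i)
      ≤ relEntropy (Q j) (familyMean {i | A i = A j} Q)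
        + log (Fintype.card ι / #{i | A i = A j}) := by
  set s : Finset ι := {i | A i = A j}
  set m := familyMean s Q
  have hj : j ∈ s := by simp [s]
  have hc : (0 : ℝ) < #s := Nat.cast_pos.2 (card_pos.2 ⟨j, hj⟩)
  have hn : (0 : ℝ) < Fintype.card ι := Nat.cast_pos.2 (Fintype.card_pos_iff.2 ⟨j⟩)
  have hm : 0 ≤ m := familyMean_nonneg fun i _ => hQ i
  have hQm : ∀ y, m y = 0 → Q j y = 0 := fun _ =>
    eq_zero_of_familyMean_eq_zero (fun i _ => hQ i) hj
  have hX : 0 ≤ A j *ᵥ Q j := mulVec_nonneg_of_nonneg (hA j) (hQ j)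
  have hfiber : ∀ x, (#s : ℝ) * (A j *ᵥ m) x = ∑ i ∈ s, (A i *ᵥ Q i) x := fun x => by
    have : (#s : ℝ) • (A j *ᵥ m) = ∑ i ∈ s, A i *ᵥ Q i := by
      rw [← mulVec_smul, card_smul_familyMean ⟨j, hj⟩, mulVec_sum]
      exact sum_congr rfl fun i hi => by rw [(mem_filter.1 hi).2]
    simpa [Finset.sum_apply] using congrFun this x
  have hXm : ∀ x, (A j *ᵥ Q j) x ≠ 0 → 0 < (A j *ᵥ m) x := fun x hx => by
    refine pos_of_mul_pos_right ?_ hc.le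
    rw [hfiber]
    exact ((hX x).lt_of_ne' hx).trans_le <|
      single_le_sum (fun i _ => mulVec_nonneg_of_nonneg (hA i) (hQ i) x) hj
  have hmix : (#s / Fintype.card ι : ℝ) • (A j *ᵥ m) ≤ familyMean univ fun i => A i *ᵥ Q i :=
    fun x => by
      rw [Pi.smul_apply, smul_eq_mul, div_mul_eq_mul_div, hfiber, familyMean_apply, card_univ,
        div_eq_inv_mul]
      exact mul_le_mul_of_nonneg_left (sum_le_sum_of_subset_of_nonneg (subset_univ s)
        fun i _ _ => mulVec_nonneg_of_nonneg (hA i) (hQ i) x) (by positivity)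
  calc relEntropy (A j *ᵥ Q j) (familyMean univ fun i => A i *ᵥ Q i)
      ≤ relEntropy (A j *ᵥ Q j) (A j *ᵥ m) - log (#s / Fintype.card ι) :=
        relEntropy_le_sub_log_of_smul_le hX (by rw [sum_mulVec_eq_sum (hA1 j), hQ1 j])
          (div_pos hc hn) hXm hmix
    _ ≤ relEntropy (Q j) m - log (#s / Fintype.card ι) := by
        gcongr
        exact relEntropy_mulVec_le (hA j) (hA1 j) (hQ j) hm hQm
    _ = relEntropy (Q j) m + log (Fintype.card ι / #s) := by
        rw [← inv_div, log_inv, sub_neg_eq_add]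

theorem indexInfo_mulVec_le [Nonempty ι] (A : ι → Matrix α β ℝ) {Q : ι → β → ℝ}
    (hQ : ∀ j, 0 ≤ Q j) (hQ1 : ∀ j, ∑ y, Q j y = 1) (hA : ∀ j x y, 0 ≤ A j x y)
    (hA1 : ∀ j y, ∑ x, A j x y = 1) :
    indexInfo (fun j => A j *ᵥ Q j) ≤ indexInfo Q + log (Set.range A).ncard := by
  have hn : (0 : ℝ) ≤ Fintype.card ι := Nat.cast_nonneg _
  have hac : ∀ j y, familyMean univ Q y = 0 → Q j y = 0 := fun j _ =>
    eq_zero_of_familyMean_eq_zero (fun i _ => hQ i) (mem_univ j)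
  calc indexInfo (fun j => A j *ᵥ Q j)
      ≤ (∑ j, (relEntropy (Q j) (familyMean {i | A i = A j} Q)
          + log (Fintype.card ι / #{i | A i = A j}))) / Fintype.card ι :=
        div_le_div_of_nonneg_right
          (sum_le_sum fun j _ => relEntropy_mulVec_mixture_le A hQ hQ1 hA hA1 j) hn
    _ = (∑ j, relEntropy (Q j) (familyMean {i | A i = A j} Q)) / Fintype.card ι
          + (∑ j, log (Fintype.card ι / #{i | A i = A j})) / Fintype.card ι := by
        rw [sum_add_distrib, add_div]
    _ ≤ indexInfo Q + log (Set.range A).ncard :=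
        add_le_add (div_le_div_of_nonneg_right (sum_relEntropy_fiberMean_le A hQ hQ1
          (familyMean_nonneg fun i _ => hQ i) (sum_familyMean univ_nonempty fun i _ => hQ1 i)
          hac) hn) (sum_log_card_div_card_fiber_le A)

end StochasticMaps

lemma entC_eq_neg_sum_mul_log_div {n : ℕ} (v : Fin n → ℝ) :
    entC v = -(∑ i, v i * log (v i)) / log 2 := by
  simp only [entC, logb, mul_div_assoc', sum_div, neg_div]

lemma entC_mixture_sub_mean_entC {ℓ n : ℕ} [NeZero ℓ] {Q : Fin ℓ → Fin n → ℝ}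
    (hQ : ∀ j, 0 ≤ Q j) :
    entC (fun a => 1 / (ℓ : ℝ) * ∑ j, Q j a) - 1 / (ℓ : ℝ) * ∑ j, entC (Q j)
      = indexInfo Q / log 2 := by
  have hmix : (fun a => 1 / (ℓ : ℝ) * ∑ j, Q j a) = familyMean univ Q :=
    funext fun a => by simp [familyMean_apply]
  rw [hmix, indexInfo_eq hQ]
  simp only [entC_eq_neg_sum_mul_log_div, Fintype.card_fin, neg_div, sum_neg_distrib, ← sum_div]
  ring

theorem more_than_d_matrices_needed_general
    (ℓ d nX nY : ℕ) (hℓ : 0 < ℓ)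
    (QY : Fin ℓ → Fin nY → ℝ)
    (hQY0 : ∀ j y, 0 ≤ QY j y) (hQY1 : ∀ j, ∑ y, QY j y = 1)
    (QX : Fin ℓ → Fin nX → ℝ)
    (A : Fin ℓ → Matrix (Fin nX) (Fin nY) ℝ)
    (hA0 : ∀ j x y, 0 ≤ A j x y) (hA1 : ∀ j y, ∑ x, A j x y = 1)
    (hAQ : ∀ j, (A j).mulVec (QY j) = QX j)
    (hgap :
      (entC (fun x => (1 / (ℓ : ℝ)) * ∑ j, QX j x)
          - (1 / (ℓ : ℝ)) * ∑ j, entC (QX j))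
        - (entC (fun y => (1 / (ℓ : ℝ)) * ∑ j, QY j y)
            - (1 / (ℓ : ℝ)) * ∑ j, entC (QY j))
        > Real.logb 2 d) :
    d < (Set.range A).ncard := by
  have : NeZero ℓ := ⟨hℓ.ne'⟩
  obtain rfl : QX = fun j => A j *ᵥ QY j := funext fun j => (hAQ j).symm
  rw [entC_mixture_sub_mean_entC fun j => mulVec_nonneg_of_nonneg (hA0 j) (hQY0 j),
    entC_mixture_sub_mean_entC hQY0, ← sub_div, gt_iff_lt, logb,
    div_lt_div_iff_of_pos_right (log_pos one_lt_two)] at hgap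
  have hinfo := indexInfo_mulVec_le A hQY0 hQY1 hA0 hA1
  by_contra! hle
  have hpos : 0 < (Set.range A).ncard :=
    Set.ncard_pos (Set.finite_range A) |>.2 (Set.range_nonempty A)
  have := log_le_log (Nat.cast_pos.2 hpos) (Nat.cast_le.2 hle)
  linarith

/-- If applying the stochastic matrices A_j increases the mutual information
with the uniform index J by more than log₂ d, then the A_j take more than d
distinct values. -/
theorem more_than_d_matrices_needed
    (ℓ d nX nY : ℕ) (hℓ : 0 < ℓ) (hd : 0 < d)
    (QY : Fin ℓ → Fin nY → ℝ)
    (hQY0 : ∀ j y, 0 ≤ QY j y) (hQY1 : ∀ j, ∑ y, QY j y = 1)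
    (QX : Fin ℓ → Fin nX → ℝ)
    (A : Fin ℓ → Matrix (Fin nX) (Fin nY) ℝ)
    (hA0 : ∀ j x y, 0 ≤ A j x y) (hA1 : ∀ j y, ∑ x, A j x y = 1)
    (hAQ : ∀ j, (A j).mulVec (QY j) = QX j)
    (hgap :
      (entC (fun x => (1 / (ℓ : ℝ)) * ∑ j, QX j x)
          - (1 / (ℓ : ℝ)) * ∑ j, entC (QX j))
        - (entC (fun y => (1 / (ℓ : ℝ)) * ∑ j, QY j y)
            - (1 / (ℓ : ℝ)) * ∑ j, entC (QY j))
        > Real.logb 2 d) :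
    d < (Set.range A).ncard :=
  more_than_d_matrices_needed_general ℓ d nX nY hℓ QY hQY0 hQY1 QX A hA0 hA1 hAQ hgap
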